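/- Let N, C be positive integers with C ∣ N, let ι be a real number with Cι ∈ ℤ, and let d be an integer with sin(πd/N) ≠ 0 and sin(π(Cι+d)/C) ≠ 0. Then |∑_{q=0}^{C−1} e^{i2πιq} ∑_{n=qN/C}^{(q+1)N/C−1} e^{i(2π/N)dn}| = |sin(π(Cι+d))/sin(π(Cι+d)/C)| · |sin(πd/C)/sin(πd/N)|. -/

import Mathlib

/-!
With `M = N / C` and `n = q M + k`, the double sum is a product of two geometric sums: one over
`q < C` with ratio `e^{iθ₁}`, `θ₁ = 2π(Cι + d)/C`, and one over `k < M` with ratio `e^{iθ₂}`,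
`θ₂ = 2πd/N`. Since `|e^{iθ} - 1| = 2|sin(θ/2)|`, a geometric sum of `K` powers of `e^{iθ}` has
modulus `|sin(Kθ/2) / sin(θ/2)|`.
-/

open Complex Finset

theorem sum_range_mul_sum_Ico_block_pow {R : Type*} [CommSemiring R] (a b : R) (C M : ℕ) :
    ∑ q ∈ range C, a ^ q * ∑ n ∈ Ico (q * M) ((q + 1) * M), b ^ n =
      (∑ q ∈ range C, (a * b ^ M) ^ q) * ∑ k ∈ range M, b ^ k := by
  rw [sum_mul]
  refine sum_congr rfl fun q _ => ?_
  have hblock : (q + 1) * M - q * M = M := by rw [add_one_mul, Nat.add_sub_cancel_left]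
  simp_rw [sum_Ico_eq_sum_range, hblock, pow_add, mul_sum, mul_pow, ← pow_mul, mul_comm M q,
    mul_assoc]

theorem norm_sum_range_exp_mul_I_pow (θ : ℝ) (K : ℕ) (h : Real.sin (θ / 2) ≠ 0) :
    ‖∑ k ∈ range K, exp (θ * I) ^ k‖ = |Real.sin (K * θ / 2) / Real.sin (θ / 2)| := by
  have hnorm (x : ℝ) : ‖exp (x * I) - 1‖ = 2 * |Real.sin (x / 2)| := by
    rw [mul_comm, norm_exp_I_mul_ofReal_sub_one, norm_mul, Real.norm_eq_abs, Real.norm_eq_abs,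
      abs_two]
  have hne : exp (θ * I) ≠ 1 := fun h1 => by
    simpa [h1, h] using hnorm θ
  rw [geom_sum_eq hne, norm_div, ← exp_nat_mul, ← mul_assoc, ← ofReal_natCast, ← ofReal_mul,
    hnorm, hnorm, abs_div, mul_div_mul_left _ _ two_ne_zero]

theorem afdm_magnitude_factorization_general (N C : ℕ) (hN : 0 < N) (hC : 0 < C)
    (hdvd : C ∣ N) (ι : ℝ) (d : ℤ)
    (hsinN : Real.sin (Real.pi * d / N) ≠ 0)
    (hsinC : Real.sin (Real.pi * ((C : ℝ) * ι + d) / C) ≠ 0) :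
    ‖∑ q ∈ Finset.range C,
        Complex.exp (2 * Real.pi * ι * q * Complex.I) *
          ∑ n ∈ Finset.Ico (q * (N / C)) ((q + 1) * (N / C)),
            Complex.exp ((2 * Real.pi / N) * d * n * Complex.I)‖ =
      |Real.sin (Real.pi * ((C : ℝ) * ι + d)) /
          Real.sin (Real.pi * ((C : ℝ) * ι + d) / C)| *
        |Real.sin (Real.pi * d / C) / Real.sin (Real.pi * d / N)| := by
  set M := N / C
  have hNCM : N = C * M := (Nat.mul_div_cancel' hdvd).symm
  have hC0 : C ≠ 0 := hC.ne'
  have hM0 : M ≠ 0 := right_ne_zero_of_mul (hNCM ▸ hN.ne')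
  set θ₁ : ℝ := 2 * Real.pi * (C * ι + d) / C with hθ₁
  set θ₂ : ℝ := 2 * Real.pi * d / N with hθ₂
  have hexp_pow (z : ℂ) (n : ℕ) : exp (z * n * I) = exp (z * I) ^ n := by
    rw [← exp_nat_mul]; ring_nf
  have hinner : exp ((2 * Real.pi / N) * d * I) = exp (θ₂ * I) := by
    rw [hθ₂]; push_cast; ring_nf
  have houter : exp (2 * Real.pi * ι * I) * exp (θ₂ * I) ^ M = exp (θ₁ * I) := by
    rw [← exp_nat_mul, ← exp_add, hθ₁, hθ₂, hNCM, Nat.cast_mul]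
    push_cast
    field_simp
  have e₁ : θ₁ / 2 = Real.pi * (C * ι + d) / C := by rw [hθ₁]; ring
  have e₂ : C * θ₁ / 2 = Real.pi * (C * ι + d) := by rw [hθ₁]; field_simp
  have e₃ : θ₂ / 2 = Real.pi * d / N := by rw [hθ₂]; ring
  have e₄ : M * θ₂ / 2 = Real.pi * d / C := by rw [hθ₂, hNCM, Nat.cast_mul]; field_simp
  simp_rw [hexp_pow, hinner]
  rw [sum_range_mul_sum_Ico_block_pow, houter, norm_mul,
    norm_sum_range_exp_mul_I_pow θ₁ C (e₁ ▸ hsinC),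
    norm_sum_range_exp_mul_I_pow θ₂ M (e₃ ▸ hsinN), e₁, e₂, e₃, e₄]

theorem afdm_magnitude_factorization (N C : ℕ) (hN : 0 < N) (hC : 0 < C)
    (hdvd : C ∣ N) (ι : ℝ) (hι : ∃ z : ℤ, (C : ℝ) * ι = z) (d : ℤ)
    (hsinN : Real.sin (Real.pi * d / N) ≠ 0)
    (hsinC : Real.sin (Real.pi * ((C : ℝ) * ι + d) / C) ≠ 0) :
    ‖∑ q ∈ Finset.range C,
        Complex.exp (2 * Real.pi * ι * q * Complex.I) *
          ∑ n ∈ Finset.Ico (q * (N / C)) ((q + 1) * (N / C)),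
            Complex.exp ((2 * Real.pi / N) * d * n * Complex.I)‖ =
      |Real.sin (Real.pi * ((C : ℝ) * ι + d)) /
          Real.sin (Real.pi * ((C : ℝ) * ι + d) / C)| *
        |Real.sin (Real.pi * d / C) / Real.sin (Real.pi * d / N)| :=
  afdm_magnitude_factorization_general N C hN hC hdvd ι d hsinN hsinC
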